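/- arXiv:2006.16191 — 2 statements merged into one kernel-verified Lean document; each statement's English description precedes it below -/
import Mathlib

section
/- Let Ω and Φ be nonempty finite sets, let μ : Ω → ℝ be nonnegative with Σ_{ω∈Ω} μ(ω) = 1, let ρ : Ω × Φ → ℝ take only the values 0 and 1, let δ > 0 be a real number, and let t be a positive integer such that 2·|Φ|·exp(−t·δ²/2) < 1. Then there exist elements ω₁, …, ω_t ∈ Ω (not necessarily distinct) such that for every φ ∈ Φ, |Σ_{i=1}^{t} ρ(ω_i, φ) − t·Σ_{ω∈Ω} μ(ω)·ρ(ω, φ)| ≤ δ·t. -/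
open Finset

lemma exp_le_cosh_add (x l : ℝ) (hx : |x| ≤ 1) :
    Real.exp (l * x) ≤ (1 + x) / 2 * Real.exp l + (1 - x) / 2 * Real.exp (-l) := by
  rw [abs_le] at hx
  have h1 : (0:ℝ) ≤ (1 + x) / 2 := by linarith [hx.1]
  have h2 : (0:ℝ) ≤ (1 - x) / 2 := by linarith [hx.2]
  have key := convexOn_exp.2 (Set.mem_univ l) (Set.mem_univ (-l)) h1 h2 (by ring)
  have he : l * x = (1 + x) / 2 * l + -((1 - x) / 2 * l) := by ring
  rw [he]
  simpa [smul_eq_mul] using key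

lemma sum_prod_pow {Ω : Type*} [Fintype Ω] (g : Ω → ℝ) (t : ℕ) :
    ∑ w : Fin t → Ω, ∏ i, g (w i) = (∑ ω, g ω) ^ t := by
  calc ∑ w : Fin t → Ω, ∏ i, g (w i)
      = ∑ w ∈ Fintype.piFinset (fun _ : Fin t => (univ : Finset Ω)), ∏ i, g (w i) := by
        rw [Fintype.piFinset_univ]
    _ = ∏ _i : Fin t, ∑ ω, g ω := (Finset.prod_univ_sum _ _).symm
    _ = (∑ ω, g ω) ^ t := by rw [Finset.prod_const, Finset.card_univ, Fintype.card_fin]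

lemma chernoff_fin {Ω : Type*} [Fintype Ω] (μ : Ω → ℝ) (hμ0 : ∀ ω, 0 ≤ μ ω)
    (hμ1 : ∑ ω, μ ω = 1) (X : Ω → ℝ) (hX : ∀ ω, |X ω| ≤ 1)
    (hmean : ∑ ω, μ ω * X ω = 0) (δ : ℝ) (hδ : 0 < δ) (t : ℕ) :
    ∑ w ∈ univ.filter (fun w : Fin t → Ω => δ * t ≤ ∑ i, X (w i)), ∏ i, μ (w i)
      ≤ Real.exp (-(t : ℝ) * δ ^ 2 / 2) := by
  have hPnonneg : ∀ w : Fin t → Ω, 0 ≤ ∏ i, μ (w i) := fun w =>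
    Finset.prod_nonneg fun i _ => hμ0 _
  have hmgf : ∑ ω, μ ω * Real.exp (δ * X ω) ≤ Real.exp (δ ^ 2 / 2) := by
    calc ∑ ω, μ ω * Real.exp (δ * X ω)
        ≤ ∑ ω, μ ω * ((1 + X ω) / 2 * Real.exp δ + (1 - X ω) / 2 * Real.exp (-δ)) :=
          Finset.sum_le_sum fun ω _ =>
            mul_le_mul_of_nonneg_left (exp_le_cosh_add _ _ (hX ω)) (hμ0 ω)
      _ = (Real.exp δ + Real.exp (-δ)) / 2 * ∑ ω, μ ω
            + (Real.exp δ - Real.exp (-δ)) / 2 * ∑ ω, μ ω * X ω := by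
          rw [Finset.mul_sum, Finset.mul_sum, ← Finset.sum_add_distrib]
          exact Finset.sum_congr rfl fun ω _ => by ring
      _ = Real.cosh δ := by rw [hμ1, hmean, Real.cosh_eq]; ring
      _ ≤ Real.exp (δ ^ 2 / 2) := Real.cosh_le_exp_half_sq δ
  have hmgf0 : 0 ≤ ∑ ω, μ ω * Real.exp (δ * X ω) :=
    Finset.sum_nonneg fun ω _ => mul_nonneg (hμ0 ω) (Real.exp_pos _).le
  calc ∑ w ∈ univ.filter (fun w : Fin t → Ω => δ * t ≤ ∑ i, X (w i)), ∏ i, μ (w i)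
      ≤ ∑ w ∈ univ.filter (fun w : Fin t → Ω => δ * t ≤ ∑ i, X (w i)),
          (∏ i, μ (w i)) * Real.exp (δ * ((∑ i, X (w i)) - δ * t)) := by
        refine Finset.sum_le_sum fun w hw => ?_
        rw [Finset.mem_filter] at hw
        have h1 : 1 ≤ Real.exp (δ * ((∑ i, X (w i)) - δ * t)) := by
          rw [← Real.exp_zero]
          exact Real.exp_le_exp.2 (mul_nonneg hδ.le (by linarith [hw.2]))
        nlinarith [hPnonneg w]
    _ ≤ ∑ w : Fin t → Ω, (∏ i, μ (w i)) * Real.exp (δ * ((∑ i, X (w i)) - δ * t)) :=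
        Finset.sum_le_sum_of_subset_of_nonneg (Finset.filter_subset _ _) fun w _ _ =>
          mul_nonneg (hPnonneg w) (Real.exp_pos _).le
    _ = Real.exp (-(δ * (δ * t))) * ∑ w : Fin t → Ω, ∏ i, μ (w i) * Real.exp (δ * X (w i)) := by
        rw [Finset.mul_sum]
        refine Finset.sum_congr rfl fun w _ => ?_
        rw [Finset.prod_mul_distrib, ← Real.exp_sum, ← Finset.mul_sum,
          ← mul_assoc, mul_comm (Real.exp _) (∏ i, μ (w i)), mul_assoc, ← Real.exp_add]
        congr 1
        ring
    _ = Real.exp (-(δ * (δ * t))) * (∑ ω, μ ω * Real.exp (δ * X ω)) ^ t := by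
        rw [sum_prod_pow (fun ω => μ ω * Real.exp (δ * X ω)) t]
    _ ≤ Real.exp (-(δ * (δ * t))) * Real.exp (δ ^ 2 / 2) ^ t := by
        exact mul_le_mul_of_nonneg_left (pow_le_pow_left₀ hmgf0 hmgf t) (Real.exp_pos _).le
    _ = Real.exp (-(t : ℝ) * δ ^ 2 / 2) := by
        rw [← Real.exp_nat_mul, ← Real.exp_add]
        congr 1
        ring

theorem stmt_1 (Ω Φ : Type*) [Fintype Ω] [Nonempty Ω] [Fintype Φ] [Nonempty Φ]
    (μ : Ω → ℝ) (hμ0 : ∀ ω, 0 ≤ μ ω) (hμ1 : ∑ ω : Ω, μ ω = 1)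
    (ρ : Ω × Φ → ℝ) (hρ : ∀ ω φ, ρ (ω, φ) = 0 ∨ ρ (ω, φ) = 1)
    (δ : ℝ) (hδ : 0 < δ) (t : ℕ) (ht : 0 < t)
    (h : 2 * (Fintype.card Φ : ℝ) * Real.exp (-(t : ℝ) * δ ^ 2 / 2) < 1) :
    ∃ w : Fin t → Ω, ∀ φ : Φ,
      |(∑ i : Fin t, ρ (w i, φ)) - (t : ℝ) * ∑ ω : Ω, μ ω * ρ (ω, φ)| ≤ δ * t := by
  classical
  by_contra hcon
  push_neg at hcon
  set p : Φ → ℝ := fun φ => ∑ ω : Ω, μ ω * ρ (ω, φ) with hp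
  have hρ01 : ∀ ω φ, 0 ≤ ρ (ω, φ) ∧ ρ (ω, φ) ≤ 1 := by
    intro ω φ; rcases hρ ω φ with h' | h' <;> rw [h'] <;> norm_num
  have hp0 : ∀ φ, 0 ≤ p φ := fun φ =>
    Finset.sum_nonneg fun ω _ => mul_nonneg (hμ0 ω) (hρ01 ω φ).1
  have hp1 : ∀ φ, p φ ≤ 1 := by
    intro φ
    calc p φ ≤ ∑ ω : Ω, μ ω := Finset.sum_le_sum fun ω _ => by
          nlinarith [(hρ01 ω φ).1, (hρ01 ω φ).2, hμ0 ω]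
      _ = 1 := hμ1
  have hXabs : ∀ φ ω, |ρ (ω, φ) - p φ| ≤ 1 := by
    intro φ ω
    rw [abs_le]
    constructor <;> nlinarith [(hρ01 ω φ).1, (hρ01 ω φ).2, hp0 φ, hp1 φ]
  have hXmean : ∀ φ, ∑ ω : Ω, μ ω * (ρ (ω, φ) - p φ) = 0 := by
    intro φ
    have : ∑ ω : Ω, μ ω * (ρ (ω, φ) - p φ)
        = (∑ ω : Ω, μ ω * ρ (ω, φ)) - p φ * ∑ ω : Ω, μ ω := by
      rw [Finset.mul_sum, ← Finset.sum_sub_distrib]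
      exact Finset.sum_congr rfl fun ω _ => by ring
    rw [this, hμ1, hp]; ring
  -- sum over each Fin-t sum of a constant and difference
  have hSdiff : ∀ (φ : Φ) (w : Fin t → Ω),
      ∑ i : Fin t, (ρ (w i, φ) - p φ) = (∑ i : Fin t, ρ (w i, φ)) - (t : ℝ) * p φ := by
    intro φ w
    rw [Finset.sum_sub_distrib, Finset.sum_const, Finset.card_univ, Fintype.card_fin,
      nsmul_eq_mul]
  set P : (Fin t → Ω) → ℝ := fun w => ∏ i, μ (w i) with hPdef
  have hPnonneg : ∀ w, 0 ≤ P w := fun w => Finset.prod_nonneg fun i _ => hμ0 _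
  have hPsum : ∑ w : Fin t → Ω, P w = 1 := by
    rw [hPdef]
    simp only
    rw [sum_prod_pow μ t, hμ1, one_pow]
  -- per-φ bad-set bound
  have hbadφ : ∀ φ : Φ,
      ∑ w ∈ univ.filter
        (fun w : Fin t → Ω => δ * t < |(∑ i : Fin t, ρ (w i, φ)) - (t : ℝ) * p φ|), P w
      ≤ 2 * Real.exp (-(t : ℝ) * δ ^ 2 / 2) := by
    intro φ
    have hplus : ∑ w ∈ univ.filter
        (fun w : Fin t → Ω => δ * t ≤ ∑ i, (ρ (w i, φ) - p φ)), P w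
        ≤ Real.exp (-(t : ℝ) * δ ^ 2 / 2) := by
      simpa using chernoff_fin μ hμ0 hμ1 (fun ω => ρ (ω, φ) - p φ)
        (fun ω => hXabs φ ω) (hXmean φ) δ hδ t
    have hmean' : ∑ ω : Ω, μ ω * (p φ - ρ (ω, φ)) = 0 := by
      have e : ∑ ω : Ω, μ ω * (p φ - ρ (ω, φ))
          = -∑ ω : Ω, μ ω * (ρ (ω, φ) - p φ) := by
        rw [← Finset.sum_neg_distrib]
        exact Finset.sum_congr rfl fun ω _ => by ring
      rw [e, hXmean φ, neg_zero]
    have hminus : ∑ w ∈ univ.filter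
        (fun w : Fin t → Ω => δ * t ≤ ∑ i, (p φ - ρ (w i, φ))), P w
        ≤ Real.exp (-(t : ℝ) * δ ^ 2 / 2) := by
      simpa using chernoff_fin μ hμ0 hμ1 (fun ω => p φ - ρ (ω, φ))
        (fun ω => by rw [abs_sub_comm]; exact hXabs φ ω) hmean' δ hδ t
    have hsumflip : ∀ w : Fin t → Ω,
        ∑ i : Fin t, (p φ - ρ (w i, φ)) = (t : ℝ) * p φ - ∑ i : Fin t, ρ (w i, φ) := by
      intro w
      have e : ∑ i : Fin t, (p φ - ρ (w i, φ))
          = -∑ i : Fin t, (ρ (w i, φ) - p φ) := by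
        rw [← Finset.sum_neg_distrib]
        exact Finset.sum_congr rfl fun i _ => by ring
      rw [e, hSdiff φ w]; ring
    calc ∑ w ∈ univ.filter
          (fun w : Fin t → Ω => δ * t < |(∑ i : Fin t, ρ (w i, φ)) - (t : ℝ) * p φ|), P w
        ≤ ∑ w ∈ univ.filter
          (fun w : Fin t → Ω => δ * t < |(∑ i : Fin t, ρ (w i, φ)) - (t : ℝ) * p φ|),
            ((if δ * t ≤ ∑ i, (ρ (w i, φ) - p φ) then P w else 0)
              + (if δ * t ≤ ∑ i, (p φ - ρ (w i, φ)) then P w else 0)) := by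
          refine Finset.sum_le_sum fun w hw => ?_
          rw [Finset.mem_filter] at hw
          have hA0 : (0:ℝ) ≤ if δ * t ≤ ∑ i, (ρ (w i, φ) - p φ) then P w else 0 := by
            split_ifs; exacts [hPnonneg w, le_refl 0]
          have hB0 : (0:ℝ) ≤ if δ * t ≤ ∑ i, (p φ - ρ (w i, φ)) then P w else 0 := by
            split_ifs; exacts [hPnonneg w, le_refl 0]
          rcases lt_abs.mp hw.2 with h' | h'
          · have hA : δ * t ≤ ∑ i, (ρ (w i, φ) - p φ) := by rw [hSdiff φ w]; linarith
            rw [if_pos hA]; linarith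
          · have hB : δ * t ≤ ∑ i, (p φ - ρ (w i, φ)) := by rw [hsumflip w]; linarith
            rw [if_pos hB]; linarith
      _ ≤ ∑ w : Fin t → Ω,
            ((if δ * t ≤ ∑ i, (ρ (w i, φ) - p φ) then P w else 0)
              + (if δ * t ≤ ∑ i, (p φ - ρ (w i, φ)) then P w else 0)) := by
          refine Finset.sum_le_sum_of_subset_of_nonneg (Finset.filter_subset _ _)
            fun w _ _ => add_nonneg ?_ ?_ <;>
            · split_ifs; exacts [hPnonneg w, le_refl 0]
      _ = (∑ w ∈ univ.filter (fun w : Fin t → Ω => δ * t ≤ ∑ i, (ρ (w i, φ) - p φ)), P w)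
            + ∑ w ∈ univ.filter (fun w : Fin t → Ω => δ * t ≤ ∑ i, (p φ - ρ (w i, φ))), P w := by
          rw [Finset.sum_add_distrib, Finset.sum_filter, Finset.sum_filter]
      _ ≤ Real.exp (-(t : ℝ) * δ ^ 2 / 2) + Real.exp (-(t : ℝ) * δ ^ 2 / 2) :=
          add_le_add hplus hminus
      _ = 2 * Real.exp (-(t : ℝ) * δ ^ 2 / 2) := by ring
  -- union bound
  have hcover : (1:ℝ) ≤ ∑ φ : Φ, ∑ w ∈ univ.filter
      (fun w : Fin t → Ω => δ * t < |(∑ i : Fin t, ρ (w i, φ)) - (t : ℝ) * p φ|), P w := by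
    rw [← hPsum]
    calc ∑ w : Fin t → Ω, P w
        ≤ ∑ w : Fin t → Ω, ∑ φ : Φ,
            (if δ * t < |(∑ i : Fin t, ρ (w i, φ)) - (t : ℝ) * p φ| then P w else 0) := by
          refine Finset.sum_le_sum fun w _ => ?_
          obtain ⟨φ, hφ⟩ := hcon w
          refine le_trans ?_ (Finset.single_le_sum
            (f := fun φ : Φ => if δ * t < |(∑ i : Fin t, ρ (w i, φ)) - (t : ℝ) * p φ|
              then P w else 0)
            (fun φ _ => by split_ifs; exacts [hPnonneg w, le_refl 0])
            (Finset.mem_univ φ))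
          simp only [hp]
          rw [if_pos hφ]
      _ = ∑ φ : Φ, ∑ w : Fin t → Ω,
            (if δ * t < |(∑ i : Fin t, ρ (w i, φ)) - (t : ℝ) * p φ| then P w else 0) :=
          Finset.sum_comm
      _ = _ := Finset.sum_congr rfl fun φ _ => (Finset.sum_filter _ _).symm
  have hfinal : (1:ℝ) ≤ (Fintype.card Φ : ℝ) * (2 * Real.exp (-(t : ℝ) * δ ^ 2 / 2)) := by
    calc (1:ℝ) ≤ ∑ _φ : Φ, 2 * Real.exp (-(t : ℝ) * δ ^ 2 / 2) :=
          le_trans hcover (Finset.sum_le_sum fun φ _ => hbadφ φ)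
      _ = (Fintype.card Φ : ℝ) * (2 * Real.exp (-(t : ℝ) * δ ^ 2 / 2)) := by
          rw [Finset.sum_const, Finset.card_univ, nsmul_eq_mul]
  nlinarith [hfinal, h]
end

section
/- Let n be a positive integer and let A and B be finite sets with |A| = |B| = n. If R ⊆ A × B satisfies |R| > n^{3/2} + n (as real numbers), then there exist a, a' ∈ A with a ≠ a' and b, b' ∈ B with b ≠ b' such that (a,b) ∈ R, (a,b') ∈ R, (a',b) ∈ R, and (a',b') ∈ R. -/
theorem stmt_4 (n : ℕ) (hn : 0 < n) (A B : Type*) [Fintype A] [Fintype B]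
    (hA : Fintype.card A = n) (hB : Fintype.card B = n)
    (R : Finset (A × B)) (hR : (n : ℝ) ^ ((3 : ℝ) / 2) + n < (R.card : ℝ)) :
    ∃ a a' : A, a ≠ a' ∧ ∃ b b' : B, b ≠ b' ∧
      (a, b) ∈ R ∧ (a, b') ∈ R ∧ (a', b) ∈ R ∧ (a', b') ∈ R := by
  by_contra hcon
  push_neg at hcon
  classical
  set N : A → Finset B := fun a => Finset.univ.filter (fun b => (a, b) ∈ R) with hN
  set d : A → ℕ := fun a => (N a).card with hd
  -- sum of degrees equals |R|
  have hsum : ∑ a, d a = R.card := by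
    rw [Finset.card_eq_sum_card_fiberwise (f := Prod.fst) (t := Finset.univ)
      (fun x _ => Finset.mem_univ _)]
    refine Finset.sum_congr rfl fun a _ => ?_
    refine Finset.card_bij' (fun b _ => (a, b)) (fun p _ => p.2) ?_ ?_ ?_ ?_
    · intro b hb
      simp only [hN, Finset.mem_filter, Finset.mem_univ, true_and] at hb
      simp [hb]
    · intro p hp
      simp only [Finset.mem_filter] at hp
      have := hp.1
      simp only [hN, Finset.mem_filter, Finset.mem_univ, true_and]
      rwa [← hp.2, Prod.mk.eta]
    · intro b hb; rfl
    · intro p hp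
      simp only [Finset.mem_filter] at hp
      exact Prod.ext hp.2.symm rfl
  -- pairwise disjointness of offDiags
  have hdisj : ((Finset.univ : Finset A) : Set A).PairwiseDisjoint
      (fun a => (N a).offDiag) := by
    intro a _ a' _ hne
    simp only [Function.onFun]
    rw [Finset.disjoint_left]
    intro q hq hq'
    rw [Finset.mem_offDiag] at hq hq'
    simp only [hN, Finset.mem_filter, Finset.mem_univ, true_and] at hq hq'
    exact hcon a a' hne q.1 q.2 hq.2.2 hq.1 hq.2.1 hq'.1 hq'.2.1
  have hcount : ∑ a, ((N a).offDiag).card ≤ ((Finset.univ : Finset B).offDiag).card := by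
    rw [← Finset.card_biUnion hdisj]
    apply Finset.card_le_card
    intro q hq
    rw [Finset.mem_biUnion] at hq
    obtain ⟨a, _, hq⟩ := hq
    rw [Finset.mem_offDiag] at hq ⊢
    exact ⟨Finset.mem_univ _, Finset.mem_univ _, hq.2.2⟩
  have hoff : ∀ a, ((N a).offDiag).card = d a * d a - d a := fun a => Finset.offDiag_card _
  have hB' : ((Finset.univ : Finset B).offDiag).card = n * n - n := by
    rw [Finset.offDiag_card]; simp [Finset.card_univ, hB]
  have hle : ∀ m : ℕ, m ≤ m * m := by
    intro m
    rcases Nat.eq_zero_or_pos m with h | h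
    · simp [h]
    · exact Nat.le_mul_of_pos_left m h
  -- key inequality in ℝ
  have hkey : ∑ a, ((d a : ℝ) * d a) - R.card ≤ (n : ℝ) * n - n := by
    have h1 : ((∑ a, ((N a).offDiag).card : ℕ) : ℝ) ≤ (((Finset.univ : Finset B).offDiag).card : ℝ) :=
      Nat.cast_le.mpr hcount
    rw [hB'] at h1
    push_cast [hoff, Nat.cast_sub (hle _), Nat.cast_sub (hle n)] at h1
    rw [Finset.sum_sub_distrib] at h1
    calc ∑ a, ((d a : ℝ) * d a) - R.card
        = ∑ a, ((d a : ℝ) * d a) - ∑ a, (d a : ℝ) := by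
          rw [← hsum]; push_cast; ring
      _ ≤ (n : ℝ) * n - n := h1
  -- Cauchy–Schwarz
  have hcs : ((R.card : ℝ)) ^ 2 ≤ (n : ℝ) * ∑ a, ((d a : ℝ) * d a) := by
    have h := sq_sum_le_card_mul_sum_sq (s := (Finset.univ : Finset A))
      (f := fun a => (d a : ℝ))
    simp only [Finset.card_univ, hA] at h
    calc ((R.card : ℝ)) ^ 2 = (∑ a, (d a : ℝ)) ^ 2 := by rw [← hsum]; push_cast; ring
      _ ≤ (n : ℝ) * ∑ a, (d a : ℝ) ^ 2 := h
      _ = (n : ℝ) * ∑ a, ((d a : ℝ) * d a) := by congr 1; exact Finset.sum_congr rfl fun a _ => sq (d a : ℝ) ▸ by ring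
  -- derive contradiction
  set r : ℝ := (R.card : ℝ) with hr
  have hn' : (0 : ℝ) < n := by exact_mod_cast hn
  have hpow : (n : ℝ) ^ ((3 : ℝ) / 2) * (n : ℝ) ^ ((3 : ℝ) / 2) = (n : ℝ) ^ 3 := by
    rw [← Real.rpow_add hn']
    norm_num
  have hrn : r * (r - n) ≤ (n : ℝ) ^ 3 := by
    have h2 : r ^ 2 - (n : ℝ) * r ≤ (n : ℝ) * ((n : ℝ) * n - n) := by
      nlinarith [hkey, hcs]
    nlinarith [h2]
  have hpos : (0 : ℝ) < (n : ℝ) ^ ((3 : ℝ) / 2) := Real.rpow_pos_of_pos hn' _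
  have h3 : (n : ℝ) ^ 3 < r * (r - n) := by
    have h4 : (n : ℝ) ^ ((3 : ℝ) / 2) < r - n := by linarith
    have h5 : (n : ℝ) ^ ((3 : ℝ) / 2) < r := by linarith
    calc (n : ℝ) ^ 3 = (n : ℝ) ^ ((3 : ℝ) / 2) * (n : ℝ) ^ ((3 : ℝ) / 2) := hpow.symm
      _ < r * (r - n) := by
          apply mul_lt_mul' (le_of_lt h5) h4 (le_of_lt hpos) (by linarith)
  linarith
end
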